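/- arXiv:2010.08884 — 6 statements merged into one kernel-verified Lean document; each statement's English description precedes it below -/
import Mathlib

section
/- Let K ⊆ ℝ^m be a nonempty closed convex set containing 0, and fix λ ≥ 1. Then for any z ∈ ℝ^m, the norm of the Euclidean projection of z onto K is at most the norm of the Euclidean projection of z onto λK; that is, ‖P_K(z)‖₂ ≤ ‖P_{λK}(z)‖₂. -/
open Pointwise
open scoped InnerProductSpace

/-!
Both projections satisfy the variational inequality of a projection onto a convex set. Testing
the one for `p` against `λ⁻¹ q ∈ K` and the one for `q` against `λ p ∈ λK` and adding them gives
`⟪q - p, q - λ p⟫ ≤ 0`, i.e. `λ‖p‖² + ‖q‖² ≤ (1 + λ)⟪p, q⟫ ≤ (1 + λ)‖p‖‖q‖`. The left side minus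
the right is `(‖p‖ - ‖q‖)(λ‖p‖ - ‖q‖)`, which would be positive if `‖q‖ < ‖p‖ ≤ λ‖p‖`.
-/

variable {F : Type*} [NormedAddCommGroup F] [InnerProductSpace ℝ F]

theorem real_inner_sub_sub_nonpos_of_forall_norm_sub_le {K : Set F} (hK : Convex ℝ K)
    {z p : F} (hpK : p ∈ K) (hp : ∀ w ∈ K, ‖z - p‖ ≤ ‖z - w‖) :
    ∀ w ∈ K, ⟪z - p, w - p⟫_ℝ ≤ 0 := by
  refine (norm_eq_iInf_iff_real_inner_le_zero hK hpK).mp ?_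
  have : Nonempty K := ⟨⟨p, hpK⟩⟩
  refine le_antisymm (le_ciInf fun w => hp w w.2) (ciInf_le ?_ (⟨p, hpK⟩ : K))
  exact ⟨0, Set.forall_mem_range.2 fun _ => norm_nonneg _⟩

theorem norm_le_of_real_inner_sub_sub_smul_nonpos {p q : F} {lam : ℝ} (hlam : 1 ≤ lam)
    (h : ⟪q - p, q - lam • p⟫_ℝ ≤ 0) : ‖p‖ ≤ ‖q‖ := by
  have hexpand : ‖q‖ ^ 2 - (1 + lam) * ⟪p, q⟫_ℝ + lam * ‖p‖ ^ 2 ≤ 0 := by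
    rw [inner_sub_left, inner_sub_right, inner_sub_right, real_inner_smul_right,
      real_inner_smul_right, real_inner_self_eq_norm_sq, real_inner_self_eq_norm_sq,
      real_inner_comm p q] at h
    linarith
  have hcs : ⟪p, q⟫_ℝ ≤ ‖p‖ * ‖q‖ := real_inner_le_norm p q
  by_contra! hlt
  have hfactor : 0 < (‖p‖ - ‖q‖) * (lam * ‖p‖ - ‖q‖) :=
    mul_pos (sub_pos.2 hlt) (sub_pos.2 (hlt.trans_le (le_mul_of_one_le_left (norm_nonneg p) hlam)))
  nlinarith

theorem projection_lemma_general {m : ℕ} (K : Set (EuclideanSpace ℝ (Fin m)))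
    (hKcv : Convex ℝ K)
    (lam : ℝ) (hlam : 1 ≤ lam) (z : EuclideanSpace ℝ (Fin m))
    (p q : EuclideanSpace ℝ (Fin m))
    (hpK : p ∈ K) (hp : ∀ w ∈ K, ‖z - p‖ ≤ ‖z - w‖)
    (hqK : q ∈ lam • K) (hq : ∀ w ∈ lam • K, ‖z - q‖ ≤ ‖z - w‖) :
    ‖p‖ ≤ ‖q‖ := by
  obtain ⟨x, hxK, rfl⟩ := Set.mem_smul_set.1 hqK
  have hpx := real_inner_sub_sub_nonpos_of_forall_norm_sub_le hKcv hpK hp x hxK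
  have hqp := real_inner_sub_sub_nonpos_of_forall_norm_sub_le (hKcv.smul lam)
    (Set.smul_mem_smul_set hxK) hq (lam • p) (Set.smul_mem_smul_set hpK)
  have hsum : ⟪lam • x - p, lam • x - lam • p⟫_ℝ
      = lam * ⟪z - p, x - p⟫_ℝ + ⟪z - lam • x, lam • p - lam • x⟫_ℝ := by
    rw [← smul_sub, ← smul_sub, real_inner_smul_right, real_inner_smul_right, ← mul_add,
      ← neg_sub x p, inner_neg_right, ← sub_eq_add_neg, ← inner_sub_left]
    congr 2
    abel
  refine norm_le_of_real_inner_sub_sub_smul_nonpos hlam ?_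
  rw [hsum]
  exact add_nonpos (mul_nonpos_of_nonneg_of_nonpos (by linarith) hpx) hqp

/-- Projection lemma: for a nonempty closed convex set `K ⊆ ℝ^m` containing `0`
and `λ ≥ 1`, the Euclidean projection of any `z` onto `K` has norm at most that
of the projection of `z` onto `λ • K`. Projections are characterized as the
points of the set minimizing the Euclidean distance to `z`. -/
theorem projection_lemma {m : ℕ} (K : Set (EuclideanSpace ℝ (Fin m)))
    (hKne : K.Nonempty) (hKcl : IsClosed K) (hKcv : Convex ℝ K) (hK0 : (0 : EuclideanSpace ℝ (Fin m)) ∈ K)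
    (lam : ℝ) (hlam : 1 ≤ lam) (z : EuclideanSpace ℝ (Fin m))
    (p q : EuclideanSpace ℝ (Fin m))
    (hpK : p ∈ K) (hp : ∀ w ∈ K, ‖z - p‖ ≤ ‖z - w‖)
    (hqK : q ∈ lam • K) (hq : ∀ w ∈ lam • K, ‖z - q‖ ≤ ‖z - w‖) :
    ‖p‖ ≤ ‖q‖ :=
  projection_lemma_general K hKcv lam hlam z p q hpK hp hqK hq
end

section
/- Let x ∈ ℝ^N be s-sparse with nonempty support T ⊆ [N], and let C := ‖x‖₁·B₁^N be the ℓ₁-ball of radius ‖x‖₁. Then the descent cone of ‖·‖₁ at x, T_C(x) := cone{z − x : ‖z‖₁ ≤ ‖x‖₁}, equals K(x) := {h ∈ ℝ^N : ‖h_{T^c}‖₁ ≤ −⟨sgn(x), h⟩}, where h_{T^c} denotes the restriction of h to the complement of T. -/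
open Finset

private lemma sign_mul_self' (a : ℝ) : Real.sign a * a = |a| := by
  rcases lt_trichotomy a 0 with h|h|h
  · rw [Real.sign_of_neg h, abs_of_neg h]; ring
  · simp [h]
  · rw [Real.sign_of_pos h, abs_of_pos h]; ring

private lemma sign_mul_le (a b : ℝ) : Real.sign a * b ≤ |b| := by
  rcases lt_trichotomy a 0 with h|h|h
  · rw [Real.sign_of_neg h]; simpa using neg_le_abs b
  · simp [h, abs_nonneg]
  · rw [Real.sign_of_pos h, one_mul]; exact le_abs_self b

/-- Equivalent characterization of the ℓ¹ descent cone at an `s`-sparse point `x`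
with nonempty support `T`: the cone of descent directions of `‖·‖₁` at `x` equals
`K(x) = {h : ‖h_{Tᶜ}‖₁ ≤ -⟨sgn x, h⟩}`. -/
theorem l1_descent_cone_eq {N : ℕ} (x : Fin N → ℝ) (hx : x ≠ 0) :
    {h : Fin N → ℝ | ∃ c : ℝ, 0 ≤ c ∧ ∃ z : Fin N → ℝ,
        (∑ i, |z i|) ≤ (∑ i, |x i|) ∧ h = c • (z - x)} =
    {h : Fin N → ℝ |
        (∑ i ∈ Finset.univ.filter (fun i => x i = 0), |h i|)
          ≤ - ∑ i, Real.sign (x i) * h i} := by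
  ext h
  simp only [Set.mem_setOf_eq]
  constructor
  · rintro ⟨c, hc, z, hz, rfl⟩
    simp only [Pi.smul_apply, Pi.sub_apply, smul_eq_mul]
    have hterm : ∀ i, (if x i = 0 then |z i| else 0) + Real.sign (x i) * z i ≤ |z i| := by
      intro i
      by_cases hxi : x i = 0
      · simp [hxi]
      · simp only [if_neg hxi, zero_add]
        exact sign_mul_le _ _
    have core : (∑ i, if x i = 0 then |z i| else 0)
        ≤ (∑ i, Real.sign (x i) * x i) - ∑ i, Real.sign (x i) * z i := by
      have h1 : (∑ i, ((if x i = 0 then |z i| else 0) + Real.sign (x i) * z i))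
          ≤ ∑ i, |z i| := Finset.sum_le_sum fun i _ => hterm i
      have h2 : (∑ i, Real.sign (x i) * x i) = ∑ i, |x i| :=
        Finset.sum_congr rfl fun i _ => sign_mul_self' (x i)
      rw [Finset.sum_add_distrib] at h1
      linarith
    have e1 : ∑ i ∈ univ.filter (fun i => x i = 0), |c * (z i - x i)|
        = c * ∑ i, if x i = 0 then |z i| else 0 := by
      rw [Finset.sum_filter, Finset.mul_sum]
      refine Finset.sum_congr rfl fun i _ => ?_
      by_cases hxi : x i = 0
      · simp [hxi, abs_mul, abs_of_nonneg hc]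
      · simp [hxi]
    have e2 : ∑ i, Real.sign (x i) * (c * (z i - x i))
        = c * (∑ i, Real.sign (x i) * z i) - c * (∑ i, Real.sign (x i) * x i) := by
      calc ∑ i, Real.sign (x i) * (c * (z i - x i))
          = ∑ i, (c * (Real.sign (x i) * z i) - c * (Real.sign (x i) * x i)) :=
            Finset.sum_congr rfl fun i _ => by ring
        _ = c * (∑ i, Real.sign (x i) * z i) - c * (∑ i, Real.sign (x i) * x i) := by
            rw [Finset.sum_sub_distrib, ← Finset.mul_sum, ← Finset.mul_sum]
    rw [e1, e2]
    nlinarith [mul_le_mul_of_nonneg_left core hc]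
  · intro hh
    have hTne : (univ.filter (fun i => x i ≠ 0)).Nonempty := by
      obtain ⟨i, hi⟩ := Function.ne_iff.mp hx
      exact ⟨i, by simpa using hi⟩
    set T := univ.filter (fun i => x i ≠ 0) with hTdef
    set t := T.inf' hTne (fun i => |x i| / (|h i| + 1)) with htdef
    have htpos : 0 < t := by
      rw [htdef, Finset.lt_inf'_iff]
      intro i hi
      have hxi : x i ≠ 0 := by simpa [hTdef] using hi
      have : 0 < |x i| := abs_pos.mpr hxi
      positivity
    have hkey : ∀ i, x i ≠ 0 → t * (|h i| + 1) ≤ |x i| := by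
      intro i hxi
      have hi : i ∈ T := by simp [hTdef, hxi]
      have h1 := Finset.inf'_le (fun i => |x i| / (|h i| + 1)) hi
      rw [← htdef] at h1
      rw [le_div_iff₀ (by positivity)] at h1
      exact h1
    have habs : ∀ i, x i ≠ 0 → |x i + t * h i| = |x i| + t * (Real.sign (x i) * h i) := by
      intro i hxi
      have hb := hkey i hxi
      have hb' : t * |h i| + t ≤ |x i| := by nlinarith
      have hle : t * h i ≤ t * |h i| := mul_le_mul_of_nonneg_left (le_abs_self _) htpos.le
      have hge : t * (-|h i|) ≤ t * h i := mul_le_mul_of_nonneg_left (neg_abs_le _) htpos.le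
      rcases lt_trichotomy (x i) 0 with hneg|h0|hpos'
      · have ha : |x i| = -x i := abs_of_neg hneg
        have h1 : x i + t * h i < 0 := by nlinarith
        rw [abs_of_neg h1, ha, Real.sign_of_neg hneg]; ring
      · exact absurd h0 hxi
      · have ha : |x i| = x i := abs_of_pos hpos'
        have h1 : 0 < x i + t * h i := by nlinarith
        rw [abs_of_pos h1, ha, Real.sign_of_pos hpos']; ring
    have hsplit := Finset.sum_filter_add_sum_filter_not univ (fun i => x i = 0)
      (fun i => |x i + t * h i|)
    have I1 : ∑ i ∈ univ.filter (fun i => x i = 0), |x i + t * h i|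
        = t * ∑ i ∈ univ.filter (fun i => x i = 0), |h i| := by
      rw [Finset.mul_sum]
      refine Finset.sum_congr rfl fun i hi => ?_
      have hxi : x i = 0 := (Finset.mem_filter.mp hi).2
      rw [hxi, zero_add, abs_mul, abs_of_pos htpos]
    have I2 : ∑ i ∈ univ.filter (fun i => ¬ x i = 0), |x i + t * h i|
        = (∑ i ∈ univ.filter (fun i => ¬ x i = 0), |x i|)
          + t * ∑ i ∈ univ.filter (fun i => ¬ x i = 0), Real.sign (x i) * h i := by
      rw [Finset.mul_sum, ← Finset.sum_add_distrib]
      refine Finset.sum_congr rfl fun i hi => ?_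
      exact habs i (Finset.mem_filter.mp hi).2
    have I3 : ∑ i ∈ univ.filter (fun i => ¬ x i = 0), |x i| = ∑ i, |x i| := by
      rw [← Finset.sum_filter_add_sum_filter_not univ (fun i => x i = 0) (fun i => |x i|)]
      have : ∑ i ∈ univ.filter (fun i => x i = 0), |x i| = 0 :=
        Finset.sum_eq_zero fun i hi => by
          simp [(Finset.mem_filter.mp hi).2]
      rw [this, zero_add]
    have I4 : ∑ i ∈ univ.filter (fun i => ¬ x i = 0), Real.sign (x i) * h i
        = ∑ i, Real.sign (x i) * h i := by
      rw [← Finset.sum_filter_add_sum_filter_not univ (fun i => x i = 0)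
        (fun i => Real.sign (x i) * h i)]
      have : ∑ i ∈ univ.filter (fun i => x i = 0), Real.sign (x i) * h i = 0 :=
        Finset.sum_eq_zero fun i hi => by
          simp [(Finset.mem_filter.mp hi).2]
      rw [this, zero_add]
    have hsum : (∑ i, |x i + t * h i|) ≤ ∑ i, |x i| := by
      have hmul := mul_le_mul_of_nonneg_left hh htpos.le
      rw [← hsplit, I1, I2, I3, I4]
      nlinarith
    refine ⟨t⁻¹, by positivity, x + t • h, ?_, ?_⟩
    · simpa using hsum
    · funext i
      rw [add_sub_cancel_left, smul_smul, inv_mul_cancel₀ htpos.ne', one_smul]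
end

section
/- For integers 1 ≤ s ≤ N, the convex hull of the set of s-sparse unit-Euclidean-norm-bounded vectors satisfies the inclusions conv(Σ_s^N ∩ B₂^N) ⊆ K_s^N ⊆ 2·conv(Σ_s^N ∩ B₂^N), where K_s^N := {x ∈ ℝ^N : ‖x‖₂ ≤ 1 and ‖x‖₁ ≤ √s} and Σ_s^N is the set of vectors with at most s nonzero entries. -/
/-!
The first inclusion is Cauchy–Schwarz on the support, `‖x‖₁ ≤ √s ‖x‖₂` for `s`-sparse `x`,
together with the convexity of `K`.

For the second, put `c = 1/√s` and split `x ∈ K` as `y + z`, where `y` keeps the coordinates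
with `|x i| > c`. As `‖x‖₁ ≤ √s = s c` there are at most `s` of them, so `y` is `s`-sparse with
`‖y‖ ≤ 1`. The rest satisfies `‖z‖_∞ ≤ c` and `‖z‖₁ ≤ s c`, which makes it a convex combination
of `s`-sparse vectors with `‖·‖_∞ ≤ c`, and these have Euclidean norm at most `√s c = 1`.
Hence `x ∈ conv S + conv S = 2 conv S` for `S = Σ_s^N ∩ B₂^N`.

The convex combination is found by induction on the number of coordinates with
`0 < |z i| < c`. If there is at most one, `‖z‖₁ ≤ s c` forces `z` to be `s`-sparse. Otherwise,
moving mass between two of them (keeping the signs and `‖z‖₁`) in either direction until one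
reaches `0` or `c` puts `z` on a segment whose endpoints have fewer such coordinates.
-/

open Finset Pointwise

variable {ι : Type*}

lemma abs_add_mul_sign {a t : ℝ} (ha : a ≠ 0) (ht : -|a| ≤ t) :
    |a + t * SignType.sign a| = |a| + t := by
  rcases ha.lt_or_gt with h | h
  · rw [abs_of_neg h] at ht ⊢
    simp only [sign_neg h, SignType.coe_neg, SignType.coe_one, mul_neg, mul_one,
      abs_of_nonpos (by linarith : a + -t ≤ 0), neg_add_rev, neg_neg]
    ring
  · rw [abs_of_pos h] at ht ⊢
    simp [sign_pos h, abs_of_nonneg (by linarith : 0 ≤ a + t)]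

section transfer

variable [DecidableEq ι]

noncomputable def transfer (z : EuclideanSpace ℝ ι) (i j : ι) (t : ℝ) : EuclideanSpace ℝ ι :=
  z + t • (EuclideanSpace.single i (SignType.sign (z i) : ℝ) -
    EuclideanSpace.single j (SignType.sign (z j) : ℝ))

lemma abs_transfer_apply {z : EuclideanSpace ℝ ι} {i j : ι} {t : ℝ} (hij : i ≠ j)
    (hi : z i ≠ 0) (hj : z j ≠ 0) (ht : 0 ≤ t) (htj : t ≤ |z j|) (k : ι) :
    |transfer z i j t k| = |z k| + (if k = i then t else 0) - (if k = j then t else 0) := by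
  by_cases hki : k = i
  · subst hki
    simpa [transfer, hij] using abs_add_mul_sign hi (by linarith [abs_nonneg (z k)] : -|z k| ≤ t)
  by_cases hkj : k = j
  · subst hkj
    simpa [transfer, hki, sub_eq_add_neg] using abs_add_mul_sign hj (by linarith : -|z k| ≤ -t)
  simp [transfer, hki, hkj]

lemma mem_segment_transfer (z : EuclideanSpace ℝ ι) (i j : ι) {t₁ t₂ : ℝ} (ht₁ : 0 ≤ t₁)
    (ht₂ : 0 ≤ t₂) :
    z ∈ segment ℝ (transfer z i j t₁) (transfer z j i t₂) := by
  rw [mem_segment_iff_sameRay, transfer, transfer, sub_add_cancel_left, add_sub_cancel_left,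
    ← neg_sub, smul_neg, neg_neg]
  exact (SameRay.sameRay_nonneg_smul_left _ ht₁).nonneg_smul_right ht₂

end transfer

variable [Fintype ι]

noncomputable def fractionalSupport (c : ℝ) (z : EuclideanSpace ℝ ι) : Finset ι :=
  {i | 0 < |z i| ∧ |z i| < c}

@[simp]
lemma mem_fractionalSupport {c : ℝ} {z : EuclideanSpace ℝ ι} {i : ι} :
    i ∈ fractionalSupport c z ↔ 0 < |z i| ∧ |z i| < c := by
  simp [fractionalSupport]

lemma card_support_le_of_card_fractionalSupport_le_one {s : ℕ} {c : ℝ} {z : EuclideanSpace ℝ ι}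
    (hz : ∀ i, |z i| ≤ c) (hz1 : ∑ i, |z i| ≤ s * c) (hF : #(fractionalSupport c z) ≤ 1) :
    #{i | z i ≠ 0} ≤ s := by
  classical
  by_contra! hs
  set T : Finset ι := {i | z i ≠ 0}
  obtain ⟨i₀, hi₀, hFi₀⟩ : ∃ i₀ ∈ T, fractionalSupport c z ⊆ {i₀} := by
    rcases (fractionalSupport c z).eq_empty_or_nonempty with hF0 | ⟨a, ha⟩
    · obtain ⟨i₀, hi₀⟩ := card_pos.mp (Nat.zero_lt_of_lt hs)
      exact ⟨i₀, hi₀, hF0 ▸ empty_subset _⟩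
    · refine ⟨a, ?_, fun b hb => mem_singleton.mpr (card_le_one.mp hF b hb a ha)⟩
      exact mem_filter.mpr ⟨mem_univ a, abs_pos.mp (mem_fractionalSupport.mp ha).1⟩
  have hpos : 0 < |z i₀| := abs_pos.mpr (mem_filter.mp hi₀).2
  have hsat : ∀ k ∈ T.erase i₀, |z k| = c := by
    intro k hk
    obtain ⟨hki₀, hk⟩ := mem_erase.mp hk
    have hkF : k ∉ fractionalSupport c z := fun h => hki₀ (mem_singleton.mp (hFi₀ h))
    rw [mem_fractionalSupport, not_and, not_lt] at hkF
    exact le_antisymm (hz k) (hkF (abs_pos.mpr (mem_filter.mp hk).2))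
  have hcard : s ≤ #(T.erase i₀) := by
    rw [card_erase_of_mem hi₀]; omega
  have hlt := calc
    s * c ≤ ∑ k ∈ T.erase i₀, |z k| := by
        rw [sum_congr rfl hsat, sum_const, nsmul_eq_mul]
        exact mul_le_mul_of_nonneg_right (by exact_mod_cast hcard) (hpos.le.trans (hz i₀))
    _ < |z i₀| + ∑ k ∈ T.erase i₀, |z k| := lt_add_of_pos_left _ hpos
    _ = ∑ k ∈ T, |z k| := add_sum_erase _ (fun k => |z k|) hi₀
    _ ≤ ∑ k, |z k| := sum_le_sum_of_subset_of_nonneg (subset_univ _) fun k _ _ => abs_nonneg _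
  linarith

lemma transfer_step [DecidableEq ι] {c t : ℝ} {z : EuclideanSpace ℝ ι} {i j : ι} (hij : i ≠ j)
    (hi : i ∈ fractionalSupport c z) (hj : j ∈ fractionalSupport c z) (hz : ∀ k, |z k| ≤ c)
    (ht : t = min (c - |z i|) |z j|) :
    (∀ k, |transfer z i j t k| ≤ c) ∧ ∑ k, |transfer z i j t k| = ∑ k, |z k| ∧
      fractionalSupport c (transfer z i j t) ⊂ fractionalSupport c z := by
  rw [mem_fractionalSupport] at hi hj
  have hti : t ≤ c - |z i| := ht ▸ min_le_left _ _
  have htj : t ≤ |z j| := ht ▸ min_le_right _ _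
  have habs := abs_transfer_apply hij (abs_pos.mp hi.1) (abs_pos.mp hj.1)
    (ht ▸ le_min (by linarith) (abs_nonneg _)) htj
  refine ⟨fun k => ?_, ?_, ?_⟩
  · rw [habs]
    split_ifs <;> grind
  · simp [habs, sum_add_distrib, sum_sub_distrib]
  · refine (ssubset_iff_of_subset fun k hk => ?_).mpr ?_
    · simp only [mem_fractionalSupport, habs] at hk ⊢
      by_cases hki : k = i
      · exact hki ▸ hi
      by_cases hkj : k = j
      · exact hkj ▸ hj
      simpa only [hki, hkj, if_false, add_zero, sub_zero] using hk
    · simp only [mem_fractionalSupport, habs, not_and, not_lt]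
      rcases le_total (c - |z i|) |z j| with h | h
      · refine ⟨i, hi, fun _ => ?_⟩
        simp only [if_pos, if_neg hij, ht, min_eq_left h]
        linarith
      · refine ⟨j, hj, fun h' => ?_⟩
        simp only [if_pos, if_neg hij.symm, ht, min_eq_right h] at h'
        linarith

theorem mem_convexHull_sparse_of_abs_le {s : ℕ} {c : ℝ} {z : EuclideanSpace ℝ ι}
    (hz : ∀ i, |z i| ≤ c) (hz1 : ∑ i, |z i| ≤ s * c) :
    z ∈ convexHull ℝ {v : EuclideanSpace ℝ ι | #{i | v i ≠ 0} ≤ s ∧ ∀ i, |v i| ≤ c} := by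
  classical
  induction hn : #(fractionalSupport c z) using Nat.strong_induction_on generalizing z with
  | _ n ih =>
  by_cases hF : #(fractionalSupport c z) ≤ 1
  · exact subset_convexHull ℝ _
      ⟨card_support_le_of_card_fractionalSupport_le_one hz hz1 hF, hz⟩
  obtain ⟨i, hi, j, hj, hij⟩ := one_lt_card.mp (not_le.mp hF)
  have hmem : ∀ {i j}, i ≠ j → i ∈ fractionalSupport c z → j ∈ fractionalSupport c z →
      transfer z i j (min (c - |z i|) |z j|) ∈ convexHull ℝ
        {v : EuclideanSpace ℝ ι | #{i | v i ≠ 0} ≤ s ∧ ∀ i, |v i| ≤ c} := by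
    intro i j hij hi hj
    obtain ⟨hbound, hsum, hlt⟩ := transfer_step hij hi hj hz rfl
    exact ih _ (hn ▸ card_lt_card hlt) hbound (hsum ▸ hz1) rfl
  have hi' := mem_fractionalSupport.mp hi
  have hj' := mem_fractionalSupport.mp hj
  exact (convex_convexHull ℝ _).segment_subset (hmem hij hi hj) (hmem hij.symm hj hi)
    (mem_segment_transfer z i j (le_min (by linarith) (abs_nonneg _))
      (le_min (by linarith) (abs_nonneg _)))

lemma sum_abs_le_sqrt_card_mul_norm (x : EuclideanSpace ℝ ι) :
    ∑ i, |x i| ≤ √(#{i | x i ≠ 0}) * ‖x‖ := by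
  rw [← sum_filter_of_ne fun i _ => abs_ne_zero.mp]
  rw [← Real.sqrt_sq (norm_nonneg x), ← Real.sqrt_mul (Nat.cast_nonneg _)]
  refine Real.le_sqrt_of_sq_le ((sq_sum_le_card_mul_sum_sq).trans ?_)
  gcongr
  calc ∑ i ∈ {i | x i ≠ 0}, |x i| ^ 2 ≤ ∑ i, x i ^ 2 := by
        simpa only [sq_abs] using sum_le_sum_of_subset_of_nonneg (subset_univ _)
          fun i _ _ => sq_nonneg (x i)
    _ = ‖x‖ ^ 2 := (EuclideanSpace.real_norm_sq_eq x).symm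

lemma convex_setOf_sum_abs_le (r : ℝ) :
    Convex ℝ {x : EuclideanSpace ℝ ι | ∑ i, |x i| ≤ r} := by
  intro x hx y hy a b ha hb hab
  calc ∑ i, |(a • x + b • y) i| ≤ ∑ i, (a * |x i| + b * |y i|) := by
        gcongr with i
        simpa [abs_mul, abs_of_nonneg ha, abs_of_nonneg hb] using abs_add_le (a * x i) (b * y i)
    _ = a * ∑ i, |x i| + b * ∑ i, |y i| := by rw [sum_add_distrib, mul_sum, mul_sum]
    _ ≤ a * r + b * r := by gcongr <;> assumption
    _ = r := by rw [← add_mul, hab, one_mul]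

lemma convexHull_sparse_inter_ball_subset (s : ℕ) :
    convexHull ℝ ({x : EuclideanSpace ℝ ι | #{i | x i ≠ 0} ≤ s} ∩ {x | ‖x‖ ≤ 1}) ⊆
      {x | ‖x‖ ≤ 1 ∧ ∑ i, |x i| ≤ √s} := by
  have hball : Convex ℝ {x : EuclideanSpace ℝ ι | ‖x‖ ≤ 1} := by
    simpa only [Metric.closedBall, dist_zero_right] using
      convex_closedBall (0 : EuclideanSpace ℝ ι) 1
  refine convexHull_min ?_ (hball.inter (convex_setOf_sum_abs_le √s))
  rintro x ⟨hxs, hx⟩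
  refine ⟨hx, ?_⟩
  calc ∑ i, |x i| ≤ √(#{i | x i ≠ 0}) * ‖x‖ := sum_abs_le_sqrt_card_mul_norm x
    _ ≤ √s * 1 := by gcongr; exacts [hxs, hx]
    _ = √s := mul_one _

lemma norm_sq_le_card_mul_sq {x : EuclideanSpace ℝ ι} {c : ℝ} (hx : ∀ i, |x i| ≤ c) :
    ‖x‖ ^ 2 ≤ #{i | x i ≠ 0} * c ^ 2 := by
  rw [EuclideanSpace.real_norm_sq_eq,
    ← sum_filter_of_ne fun i _ => (pow_ne_zero_iff two_ne_zero).mp, ← nsmul_eq_mul]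
  exact sum_le_card_nsmul _ _ _ fun i _ => sq_abs (x i) ▸ pow_le_pow_left₀ (abs_nonneg _) (hx i) 2

lemma norm_le_one_of_card_support_le {s : ℕ} {c : ℝ} {v : EuclideanSpace ℝ ι}
    (hvs : #{i | v i ≠ 0} ≤ s) (hv : ∀ i, |v i| ≤ c) (hc : s * c ^ 2 ≤ 1) : ‖v‖ ≤ 1 := by
  refine (sq_le_one_iff₀ (norm_nonneg v)).mp ?_
  calc ‖v‖ ^ 2 ≤ #{i | v i ≠ 0} * c ^ 2 := norm_sq_le_card_mul_sq hv
    _ ≤ s * c ^ 2 := by gcongr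
    _ ≤ 1 := hc

lemma norm_le_norm_of_forall_abs_le {x y : EuclideanSpace ℝ ι} (h : ∀ i, |y i| ≤ |x i|) :
    ‖y‖ ≤ ‖x‖ := by
  rw [← sq_le_sq₀ (norm_nonneg y) (norm_nonneg x), EuclideanSpace.real_norm_sq_eq,
    EuclideanSpace.real_norm_sq_eq]
  exact sum_le_sum fun i _ => sq_le_sq.mpr (h i)

lemma card_lt_abs_mul_le_sum_abs (x : EuclideanSpace ℝ ι) (c : ℝ) :
    #{i | c < |x i|} * c ≤ ∑ i, |x i| := by
  rw [← nsmul_eq_mul]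
  calc #{i | c < |x i|} • c ≤ ∑ i ∈ {i | c < |x i|}, |x i| :=
        card_nsmul_le_sum _ _ _ fun i hi => (mem_filter.mp hi).2.le
    _ ≤ ∑ i, |x i| := sum_le_sum_of_subset_of_nonneg (subset_univ _) fun i _ _ => abs_nonneg _

lemma exists_eq_add_of_threshold (x : EuclideanSpace ℝ ι) {c : ℝ} (hc : 0 ≤ c) :
    ∃ y z : EuclideanSpace ℝ ι, x = y + z ∧ #{i | y i ≠ 0} ≤ #{i | c < |x i|} ∧ ‖y‖ ≤ ‖x‖ ∧
      (∀ i, |z i| ≤ c) ∧ ∑ i, |z i| ≤ ∑ i, |x i| := by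
  set y : EuclideanSpace ℝ ι := WithLp.toLp 2 fun i => if c < |x i| then x i else 0
  refine ⟨y, x - y, (add_sub_cancel y x).symm, card_le_card fun i => ?_,
    norm_le_norm_of_forall_abs_le fun i => ?_, fun i => ?_, sum_le_sum fun i _ => ?_⟩
  · simp only [mem_filter, mem_univ, true_and, y]
    split_ifs with h <;> simp [h]
  · simp only [y]
    split_ifs <;> simp
  · simp only [y, PiLp.sub_apply]
    split_ifs with h
    · simpa using hc
    · simpa using not_lt.mp h
  · simp only [y, PiLp.sub_apply]
    split_ifs <;> simp

theorem convexification_general {N s : ℕ} (hs1 : 1 ≤ s) :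
    convexHull ℝ ({x : EuclideanSpace ℝ (Fin N) |
        (Finset.univ.filter (fun i => x i ≠ 0)).card ≤ s} ∩ {x | ‖x‖ ≤ 1})
      ⊆ {x : EuclideanSpace ℝ (Fin N) | ‖x‖ ≤ 1 ∧ (∑ i, |x i|) ≤ Real.sqrt s} ∧
    {x : EuclideanSpace ℝ (Fin N) | ‖x‖ ≤ 1 ∧ (∑ i, |x i|) ≤ Real.sqrt s}
      ⊆ (2 : ℝ) • convexHull ℝ ({x : EuclideanSpace ℝ (Fin N) |
        (Finset.univ.filter (fun i => x i ≠ 0)).card ≤ s} ∩ {x | ‖x‖ ≤ 1}) := by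
  refine ⟨convexHull_sparse_inter_ball_subset s, ?_⟩
  set S : Set (EuclideanSpace ℝ (Fin N)) := {x | #{i | x i ≠ 0} ≤ s} ∩ {x | ‖x‖ ≤ 1}
  rintro x ⟨hx, hx1⟩
  set c : ℝ := (√s)⁻¹
  have hc : 0 < c := inv_pos.mpr (Real.sqrt_pos.mpr (by exact_mod_cast hs1))
  have hsc : s * c = √s := by rw [← div_eq_mul_inv, Real.div_sqrt]
  have hsc2 : s * c ^ 2 ≤ 1 := by rw [sq, ← mul_assoc, hsc, mul_inv_cancel₀ (inv_pos.mp hc).ne']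
  have hlarge : #{i | c < |x i|} ≤ s := by
    have hsum := (card_lt_abs_mul_le_sum_abs x c).trans (hx1.trans hsc.ge)
    exact_mod_cast le_of_mul_le_mul_right hsum hc
  obtain ⟨y, z, rfl, hys, hy, hz, hz1⟩ := exists_eq_add_of_threshold x hc.le
  have hyS : y ∈ convexHull ℝ S := subset_convexHull ℝ S ⟨hys.trans hlarge, hy.trans hx⟩
  have hbox : {v | #{i | v i ≠ 0} ≤ s ∧ ∀ i, |v i| ≤ c} ⊆ S :=
    fun v ⟨hvs, hv⟩ => ⟨hvs, norm_le_one_of_card_support_le hvs hv hsc2⟩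
  have hzS : z ∈ convexHull ℝ S :=
    convexHull_mono hbox (mem_convexHull_sparse_of_abs_le hz (hsc ▸ hz1.trans hx1))
  have h2 := (convex_convexHull ℝ S).add_smul zero_le_one zero_le_one
  rw [one_add_one_eq_two, one_smul] at h2
  rw [h2]
  exact Set.add_mem_add hyS hzS

/-- Convexification: `conv(Σ_s^N ∩ B₂^N) ⊆ K_s^N ⊆ 2 conv(Σ_s^N ∩ B₂^N)`, where
`Σ_s^N` is the set of `s`-sparse vectors, `B₂^N` the Euclidean unit ball, and
`K_s^N = {x : ‖x‖₂ ≤ 1 ∧ ‖x‖₁ ≤ √s}`. -/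
theorem convexification {N s : ℕ} (hs1 : 1 ≤ s) (hsN : s ≤ N) :
    convexHull ℝ ({x : EuclideanSpace ℝ (Fin N) |
        (Finset.univ.filter (fun i => x i ≠ 0)).card ≤ s} ∩ {x | ‖x‖ ≤ 1})
      ⊆ {x : EuclideanSpace ℝ (Fin N) | ‖x‖ ≤ 1 ∧ (∑ i, |x i|) ≤ Real.sqrt s} ∧
    {x : EuclideanSpace ℝ (Fin N) | ‖x‖ ≤ 1 ∧ (∑ i, |x i|) ≤ Real.sqrt s}
      ⊆ (2 : ℝ) • convexHull ℝ ({x : EuclideanSpace ℝ (Fin N) |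
        (Finset.univ.filter (fun i => x i ≠ 0)).card ≤ s} ∩ {x | ‖x‖ ≤ 1}) :=
  convexification_general hs1
end

section
/- Let A ∈ ℝ^{m×N} with nontrivial null space, x₀ ∈ ℝ^N, and τ > ‖x₀‖₁, with ρ := τ − ‖x₀‖₁. Let z ∈ range(A) ⊆ ℝ^m and let ζ ∈ ℝ^N satisfy A ζ = z. Then for any 0 < η < ρ/‖ζ‖₁, the point ξ := x₀ + η ζ is feasible for the constrained Lasso {x : ‖x‖₁ ≤ τ} and achieves zero residual ‖(A x₀ + η z) − A ξ‖₂ = 0; moreover ξ lies in the interior of τ B₁^N, so there exists ν ∈ Null(A), ν ≠ 0, with ‖ξ + ν‖₁ ∈ [(τ + ‖x₀‖₁)/2, τ] and A(ξ + ν) = A x₀ + η z, and every such point satisfies ‖ξ + ν − x₀‖₂² ≥ ρ²/(4N). -/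
/-!
Since `η ‖ζ‖₁ < ρ`, the triangle inequality puts `ξ = x₀ + η ζ` strictly inside `τ B₁^N`, and
`A ξ = A x₀ + η z` by linearity. Moving from `ξ` along a nonzero kernel direction `v`, the
`ℓ₁`-norm of `ξ + t v` grows without bound, so by the intermediate value theorem it equals `τ`
for some `t > 0`; then `ν = t v` does the job. Conversely, any admissible `ξ + ν` is at
`ℓ₁`-distance at least `ρ / 2` from `x₀`, and `‖w‖₁² ≤ N ‖w‖₂²` gives the bound.
-/

open Finset Matrix

theorem exists_pos_norm_add_smul_eq {E : Type*} [NormedAddCommGroup E] [NormedSpace ℝ E]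
    {x v : E} {c : ℝ} (hv : v ≠ 0) (hx : ‖x‖ < c) : ∃ t : ℝ, 0 < t ∧ ‖x + t • v‖ = c := by
  have hv_pos : 0 < ‖v‖ := norm_pos_iff.2 hv
  set T := (c + ‖x‖) / ‖v‖
  have hT : 0 ≤ T := div_nonneg (by linarith [norm_nonneg x]) hv_pos.le
  have hcT : c ≤ ‖x + T • v‖ := calc
    c = ‖T • v‖ - ‖x‖ := by
      rw [norm_smul, Real.norm_of_nonneg hT, div_mul_cancel₀ _ hv_pos.ne']; ring
    _ ≤ ‖x + T • v‖ := by
      have := norm_sub_le (x + T • v) x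
      rw [add_sub_cancel_left] at this
      linarith
  have hcont : Continuous fun t : ℝ => ‖x + t • v‖ := by fun_prop
  obtain ⟨t, ⟨ht0, -⟩, ht⟩ :=
    intermediate_value_Icc hT hcont.continuousOn ⟨by simpa using hx.le, hcT⟩
  refine ⟨t, ht0.lt_of_ne ?_, ht⟩
  rintro rfl
  simp only [zero_smul, add_zero] at ht
  linarith

section FiniteSums

variable {ι : Type*} [Fintype ι]

theorem norm_toLp_one (x : ι → ℝ) : ‖WithLp.toLp 1 x‖ = ∑ i, |x i| := by
  simp [PiLp.norm_eq_of_L1]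

theorem sum_abs_add_mul_lt {x ζ : ι → ℝ} {η τ : ℝ} (hη : 0 ≤ η)
    (h : η * ∑ i, |ζ i| < τ - ∑ i, |x i|) : ∑ i, |x i + η * ζ i| < τ :=
  calc ∑ i, |x i + η * ζ i| ≤ ∑ i, (|x i| + η * |ζ i|) := sum_le_sum fun i _ => by
        simpa [abs_mul, abs_of_nonneg hη] using abs_add_le (x i) (η * ζ i)
    _ = ∑ i, |x i| + η * ∑ i, |ζ i| := by rw [sum_add_distrib, mul_sum]
    _ < τ := by linarith

theorem sq_div_card_le_sum_sq_sub {x y : ι → ℝ} {r : ℝ} (hr : 0 ≤ r)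
    (h : r + ∑ i, |x i| ≤ ∑ i, |y i|) :
    r ^ 2 / Fintype.card ι ≤ ∑ i, (y i - x i) ^ 2 := by
  have hdist : r ≤ ∑ i, |y i - x i| := by
    have : ∑ i, |y i| ≤ ∑ i, (|y i - x i| + |x i|) :=
      sum_le_sum fun i _ => by linarith [abs_sub_abs_le_abs_sub (y i) (x i)]
    rw [sum_add_distrib] at this
    linarith
  refine div_le_of_le_mul₀ (Nat.cast_nonneg _) (sum_nonneg fun i _ => sq_nonneg _) ?_
  calc r ^ 2 ≤ (∑ i, |y i - x i|) ^ 2 := pow_le_pow_left₀ hr hdist 2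
    _ ≤ Fintype.card ι * ∑ i, |y i - x i| ^ 2 := by
      simpa using sq_sum_le_card_mul_sum_sq (s := univ) (f := fun i => |y i - x i|)
    _ = (∑ i, (y i - x i) ^ 2) * Fintype.card ι := by simp only [sq_abs, mul_comm]

end FiniteSums

/-- Underconstrained LASSO construction: if `τ > ‖x₀‖₁`, `A` has nontrivial null
space, `z = Aζ`, and `0 < η` with `η‖ζ‖₁ < ρ := τ - ‖x₀‖₁`, then `ξ := x₀ + ηζ`
is feasible with zero residual and lies in the interior of `τB₁`; hence there is
`0 ≠ ν ∈ Null(A)` with `‖ξ + ν‖₁ ∈ [(τ + ‖x₀‖₁)/2, τ]` and `A(ξ+ν) = Ax₀ + ηz`,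
and every such point satisfies `‖ξ + ν - x₀‖₂² ≥ ρ²/(4N)`. -/
theorem ls_underconstrained_construction {m N : ℕ}
    (A : Matrix (Fin m) (Fin N) ℝ)
    (hNull : ∃ v : Fin N → ℝ, v ≠ 0 ∧ A.mulVec v = 0)
    (x₀ : Fin N → ℝ) (τ : ℝ) (hτ : (∑ i, |x₀ i|) < τ)
    (ζ : Fin N → ℝ) (z : Fin m → ℝ) (hζ : A.mulVec ζ = z)
    (η : ℝ) (hη : 0 < η) (hηs : η * (∑ i, |ζ i|) < τ - ∑ i, |x₀ i|) :
    (∑ i, |x₀ i + η * ζ i|) < τ ∧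
    A.mulVec (x₀ + η • ζ) = A.mulVec x₀ + η • z ∧
    (∃ ν : Fin N → ℝ, ν ≠ 0 ∧ A.mulVec ν = 0 ∧
      (∑ i, |x₀ i + η * ζ i + ν i|) ∈ Set.Icc ((τ + ∑ i, |x₀ i|) / 2) τ ∧
      A.mulVec (x₀ + η • ζ + ν) = A.mulVec x₀ + η • z) ∧
    (∀ ν : Fin N → ℝ, A.mulVec ν = 0 →
      (∑ i, |x₀ i + η * ζ i + ν i|) ∈ Set.Icc ((τ + ∑ i, |x₀ i|) / 2) τ →
      (∑ i, (x₀ i + η * ζ i + ν i - x₀ i) ^ 2) ≥ (τ - ∑ i, |x₀ i|) ^ 2 / (4 * N)) := by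
  have hfeas := sum_abs_add_mul_lt hη.le hηs
  have hres : A *ᵥ (x₀ + η • ζ) = A *ᵥ x₀ + η • z := by rw [mulVec_add, mulVec_smul, hζ]
  refine ⟨hfeas, hres, ?_, fun ν _ hν => ?_⟩
  · obtain ⟨v, hv, hAv⟩ := hNull
    obtain ⟨t, ht, hnorm⟩ := exists_pos_norm_add_smul_eq (x := WithLp.toLp 1 (x₀ + η • ζ))
      (v := WithLp.toLp 1 v) (by simpa using hv) (by rw [norm_toLp_one]; exact hfeas)
    rw [← WithLp.toLp_smul, ← WithLp.toLp_add, norm_toLp_one] at hnorm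
    refine ⟨t • v, smul_ne_zero ht.ne' hv, by rw [mulVec_smul, hAv, smul_zero], ?_,
      by rw [mulVec_add, hres, mulVec_smul, hAv, smul_zero, add_zero]⟩
    simp only [Pi.add_apply, Pi.smul_apply, smul_eq_mul] at hnorm ⊢
    exact ⟨by linarith, hnorm.le⟩
  · have := sq_div_card_le_sum_sq_sub (x := x₀) (y := fun i => x₀ i + η * ζ i + ν i)
      (r := (τ - ∑ i, |x₀ i|) / 2) (by linarith) (by linarith [hν.1])
    rw [Fintype.card_fin] at this
    convert this using 1
    ring
end

section
/- Let K ⊆ ℝ^m be nonempty, closed, convex, with 0 ∈ K, and let ‖·‖_K denote its gauge. For y ∈ ℝ^m and α > 0, define β := ‖q_α‖_K where q_α minimizes ‖q‖_K over {q : ‖q − y‖₂ ≤ α}. Then q_α equals the Euclidean projection of y onto βK, i.e., q_α = P_{βK}(y). -/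
open Pointwise

/-- If `q_α` minimizes the gauge of `K` over the ball `{‖q - y‖ ≤ α}` and
`β := gauge K q_α > 0`, then `q_α` is the Euclidean projection of `y` onto
`βK`, i.e. it lies in `βK` and minimizes the distance to `y` over `βK`. -/
theorem gauge_minimizer_is_projection {m : ℕ} (K : Set (EuclideanSpace ℝ (Fin m)))
    (hKne : K.Nonempty) (hKcl : IsClosed K) (hKcv : Convex ℝ K)
    (hK0 : (0 : EuclideanSpace ℝ (Fin m)) ∈ K)
    (y : EuclideanSpace ℝ (Fin m)) (α : ℝ) (hα : 0 < α)
    (qα : EuclideanSpace ℝ (Fin m))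
    (hmem : ‖qα - y‖ ≤ α) (hmin : ∀ q, ‖q - y‖ ≤ α → gauge K qα ≤ gauge K q)
    (hβ : 0 < gauge K qα) :
    qα ∈ (gauge K qα) • K ∧
      ∀ w ∈ (gauge K qα) • K, ‖y - qα‖ ≤ ‖y - w‖ := by
  set β := gauge K qα with hβdef
  -- The defining set of the gauge is nonempty since β > 0
  have hne : { r : ℝ | 0 < r ∧ qα ∈ r • K }.Nonempty := by
    by_contra h
    rw [Set.not_nonempty_iff_eq_empty] at h
    have : β = 0 := by
      rw [hβdef, gauge, h, Real.sInf_empty]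
    exact hβ.ne' this
  -- key: for every t > 1, (t⁻¹ * β⁻¹) • qα ∈ K
  have key : ∀ t : ℝ, 1 < t → t⁻¹ • (β⁻¹ • qα) ∈ K := by
    intro t ht
    have h1 : gauge K qα < t * β := by
      nlinarith
    obtain ⟨b, ⟨hb0, hbK⟩, hblt⟩ := exists_lt_of_csInf_lt hne h1
    obtain ⟨k, hk, hkeq⟩ := hbK
    have ht0 : (0:ℝ) < t := lt_trans one_pos ht
    have hcoef : t⁻¹ * β⁻¹ * b ∈ Set.Icc (0:ℝ) 1 := by
      constructor
      · positivity
      · have h2 : t⁻¹ * β⁻¹ * b ≤ t⁻¹ * β⁻¹ * (t * β) :=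
          mul_le_mul_of_nonneg_left hblt.le (by positivity)
        have h3 : t⁻¹ * β⁻¹ * (t * β) = 1 := by field_simp
        linarith
    have := hKcv.smul_mem_of_zero_mem hK0 hk hcoef
    have heq : (t⁻¹ * β⁻¹ * b) • k = t⁻¹ • (β⁻¹ • qα) := by
      rw [← hkeq]
      module
    rwa [heq] at this
  have hmemK : β⁻¹ • qα ∈ K := by
    have htend : Filter.Tendsto (fun t : ℝ => t⁻¹ • (β⁻¹ • qα)) (nhdsWithin 1 (Set.Ioi 1))
        (nhds (β⁻¹ • qα)) := by
      have h1 : Filter.Tendsto (fun t : ℝ => t⁻¹) (nhds 1) (nhds 1) := by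
        simpa using (continuousAt_inv₀ (one_ne_zero (α := ℝ))).tendsto
      have h2 := h1.smul_const (β⁻¹ • qα)
      rw [one_smul] at h2
      exact h2.mono_left nhdsWithin_le_nhds
    exact hKcl.mem_of_tendsto htend (Filter.eventually_of_mem self_mem_nhdsWithin
      fun t ht => key t ht)
  constructor
  · have : β • (β⁻¹ • qα) ∈ β • K := Set.smul_mem_smul_set hmemK
    rwa [smul_smul, mul_inv_cancel₀ hβ.ne', one_smul] at this
  · rintro w ⟨k, hk, rfl⟩
    by_contra hcon
    push_neg at hcon
    have hgw : gauge K (β • k) ≤ β := by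
      rw [gauge_smul_of_nonneg hβ.le]
      have := gauge_le_one_of_mem hk
      calc β • gauge K k ≤ β • 1 := by exact smul_le_smul_of_nonneg_left this hβ.le
        _ = β := by simp
    set w := β • k with hwdef
    have hwy : ‖w - y‖ < α := by
      rw [← norm_sub_rev]
      calc ‖y - w‖ < ‖y - qα‖ := hcon
        _ = ‖qα - y‖ := norm_sub_rev _ _
        _ ≤ α := hmem
    set ε := α - ‖w - y‖ with hεdef
    have hε : 0 < ε := by simp [hεdef]; linarith
    set δ := min (ε / (‖y‖ + 1)) (1/2) with hδdef
    have hδ0 : 0 < δ := by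
      apply lt_min
      · positivity
      · norm_num
    have hδ1 : δ < 1 := lt_of_le_of_lt (min_le_right _ _) (by norm_num)
    set t := 1 - δ with htdef
    have ht0 : 0 < t := by simp [htdef]; linarith
    have ht1 : t < 1 := by simp [htdef]; linarith
    have hdist : ‖t • w - y‖ ≤ α := by
      have heq : t • w - y = t • (w - y) - (1 - t) • y := by
        module
      rw [heq]
      calc ‖t • (w - y) - (1 - t) • y‖ ≤ ‖t • (w - y)‖ + ‖(1 - t) • y‖ := norm_sub_le _ _
        _ = t * ‖w - y‖ + (1 - t) * ‖y‖ := by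
            rw [norm_smul, norm_smul, Real.norm_of_nonneg ht0.le,
              Real.norm_of_nonneg (by linarith)]
        _ ≤ ‖w - y‖ + δ * ‖y‖ := by
            have h1 : t * ‖w - y‖ ≤ ‖w - y‖ := by
              nlinarith [norm_nonneg (w - y)]
            have h2 : (1 - t) = δ := by simp [htdef]
            rw [h2]; linarith
        _ ≤ ‖w - y‖ + ε := by
            have : δ * ‖y‖ ≤ ε := by
              have hδle : δ ≤ ε / (‖y‖ + 1) := min_le_left _ _
              have := mul_le_mul_of_nonneg_right hδle (norm_nonneg y)
              calc δ * ‖y‖ ≤ ε / (‖y‖ + 1) * ‖y‖ := this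
                _ ≤ ε := by
                    rw [div_mul_eq_mul_div, div_le_iff₀ (by positivity)]
                    nlinarith [norm_nonneg y]
            linarith
        _ = α := by simp [hεdef]
    have := hmin (t • w) hdist
    have hgtw : gauge K (t • w) = t * gauge K w := by
      rw [gauge_smul_of_nonneg ht0.le]; simp
    rw [hgtw] at this
    nlinarith [hgw, gauge_nonneg (s := K) (x := w)]
end

section
/- Let K ⊆ ℝ^N be a nonempty closed convex set, A ∈ ℝ^{m×N}, x₀ ∈ K with ‖x₀‖_K = 1, η > 0 and z ∈ ℝ^m. For τ > 0 let y(τ) := Aτx₀ + ηz, let x̂(τ) minimize ‖y(τ) − Ax‖₂² over τK, and define q(τ) := A(x̂(τ) − τx₀). Then q(τ) is the Euclidean projection of ηz onto τK′, where K′ := {A(x − x₀) : x ∈ K}, and hence for 0 < τ₁ ≤ τ₂, ‖q(τ₁)‖₂ ≤ ‖q(τ₂)‖₂. -/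
open Pointwise

open Matrix

lemma dp_expand {m : ℕ} (u v : Fin m → ℝ) (t : ℝ) :
    (u - t • v) ⬝ᵥ (u - t • v) = u ⬝ᵥ u - 2 * t * (u ⬝ᵥ v) + t^2 * (v ⬝ᵥ v) := by
  simp only [sub_dotProduct, dotProduct_sub, smul_dotProduct,
    dotProduct_smul, smul_eq_mul, dotProduct_comm v u]
  ring

lemma vi_of_min {m : ℕ} {C : Set (Fin m → ℝ)} (hC : Convex ℝ C) {w p : Fin m → ℝ}
    (hpC : p ∈ C)
    (hmin : ∀ x ∈ C, (w - p) ⬝ᵥ (w - p) ≤ (w - x) ⬝ᵥ (w - x))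
    {c : Fin m → ℝ} (hc : c ∈ C) :
    (w - p) ⬝ᵥ (c - p) ≤ 0 := by
  by_contra hcon
  push_neg at hcon
  set a := (w - p) ⬝ᵥ (c - p) with ha
  set d := (c - p) ⬝ᵥ (c - p) with hd
  have hd0 : 0 ≤ d := by
    apply Finset.sum_nonneg
    intro i _
    exact mul_self_nonneg _
  set t : ℝ := min 1 (a / (a + d)) with htdef
  have had : 0 < a + d := by linarith
  have ht0 : 0 < t := lt_min one_pos (div_pos hcon had)
  have ht1 : t ≤ 1 := min_le_left _ _
  have htle : t * (a + d) ≤ a := by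
    have h : t ≤ a / (a + d) := min_le_right _ _
    calc t * (a + d) ≤ (a / (a + d)) * (a + d) := by nlinarith
    _ = a := by field_simp
  have hmem : (1 - t) • p + t • c ∈ C := hC hpC hc (by linarith) (le_of_lt ht0) (by ring)
  have key := hmin _ hmem
  have heq : w - ((1 - t) • p + t • c) = (w - p) - t • (c - p) := by
    funext j; simp [Pi.smul_apply]; ring
  rw [heq, dp_expand, ← ha, ← hd] at key
  nlinarith [mul_pos ht0 hcon, mul_le_mul_of_nonneg_left htle (le_of_lt ht0)]

lemma proj_mono {m : ℕ} {C₁ C₂ : Set (Fin m → ℝ)} (h₁ : Convex ℝ C₁) (h₂ : Convex ℝ C₂)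
    {w p₁ p₂ : Fin m → ℝ} (hp₁ : p₁ ∈ C₁) (hp₂ : p₂ ∈ C₂)
    (hmin₁ : ∀ x ∈ C₁, (w - p₁) ⬝ᵥ (w - p₁) ≤ (w - x) ⬝ᵥ (w - x))
    (hmin₂ : ∀ x ∈ C₂, (w - p₂) ⬝ᵥ (w - p₂) ≤ (w - x) ⬝ᵥ (w - x))
    {t : ℝ} (ht0 : 0 < t) (ht1 : t ≤ 1)
    (h12 : t • p₂ ∈ C₁) (h21 : t⁻¹ • p₁ ∈ C₂) :
    p₁ ⬝ᵥ p₁ ≤ p₂ ⬝ᵥ p₂ := by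
  have V1 := vi_of_min h₁ hp₁ hmin₁ h12
  have V2 := vi_of_min h₂ hp₂ hmin₂ h21
  -- expand everything into scalar dot products
  set P := p₁ ⬝ᵥ p₁ with hP
  set Q := p₂ ⬝ᵥ p₂ with hQ
  set c := p₁ ⬝ᵥ p₂ with hc
  have hP0 : 0 ≤ P := Finset.sum_nonneg fun i _ => mul_self_nonneg _
  have hQ0 : 0 ≤ Q := Finset.sum_nonneg fun i _ => mul_self_nonneg _
  have hcs : c ^ 2 ≤ P * Q := by
    have := Finset.sum_mul_sq_le_sq_mul_sq Finset.univ p₁ p₂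
    simpa [hP, hQ, hc, dotProduct, sq] using this
  have e1 : (w - p₁) ⬝ᵥ (t • p₂ - p₁) =
      t * (w ⬝ᵥ p₂) - (w ⬝ᵥ p₁) - t * c + P := by
    simp only [sub_dotProduct, dotProduct_sub, dotProduct_smul,
      smul_eq_mul, dotProduct_comm p₁ w, ← hP, ← hc]
    ring
  have e2 : (w - p₂) ⬝ᵥ (t⁻¹ • p₁ - p₂) =
      t⁻¹ * (w ⬝ᵥ p₁) - (w ⬝ᵥ p₂) - t⁻¹ * (p₂ ⬝ᵥ p₁) + Q := by
    simp only [sub_dotProduct, dotProduct_sub, dotProduct_smul,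
      smul_eq_mul, dotProduct_comm p₂ w, ← hQ]
    ring
  rw [e1] at V1
  rw [e2, dotProduct_comm p₂ p₁, ← hc] at V2
  -- multiply V2 by t
  have V2' : (w ⬝ᵥ p₁) - t * (w ⬝ᵥ p₂) - c + t * Q ≤ 0 := by
    have h := mul_le_mul_of_nonneg_left V2 (le_of_lt ht0)
    rw [mul_zero] at h
    calc (w ⬝ᵥ p₁) - t * (w ⬝ᵥ p₂) - c + t * Q
        = t * (t⁻¹ * (w ⬝ᵥ p₁) - w ⬝ᵥ p₂ - t⁻¹ * c + Q) := by
          field_simp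
      _ ≤ 0 := h
  have hkey : P + t * Q ≤ (1 + t) * c := by nlinarith
  -- conclude P ≤ Q
  by_contra hlt
  push_neg at hlt
  have hsum0 : 0 ≤ P + t * Q := by nlinarith
  have h1 : (P + t * Q) ^ 2 ≤ ((1 + t) * c) ^ 2 := by
    have := mul_self_le_mul_self hsum0 hkey
    nlinarith [this]
  have h2 : (P + t * Q) ^ 2 ≤ (1 + t) ^ 2 * (P * Q) := by
    nlinarith [mul_le_mul_of_nonneg_left hcs (sq_nonneg (1 + t))]
  have h3 : 0 ≤ (1 - t ^ 2) * (Q * (P - Q)) :=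
    mul_nonneg (by nlinarith) (mul_nonneg hQ0 (by linarith))
  nlinarith [pow_pos (sub_pos.2 hlt) 2, h2, h3]

lemma sum_sq_dp {m : ℕ} (u : Fin m → ℝ) : ∑ j, (u j) ^ 2 = u ⬝ᵥ u := by
  simp [dotProduct, sq]

/-- Constrained generalized LASSO at scaled truth: with `‖x₀‖_K = 1`, data
`y(τ) = A(τx₀) + ηz`, and `x̂(τ)` a minimizer of `‖y(τ) - Ax‖₂²` over `τK`, the
point `q(τ) := A(x̂(τ) - τx₀)` is the Euclidean projection of `ηz` onto
`τK'` where `K' = {A(x - x₀) : x ∈ K}`; consequently `‖q(τ)‖₂` is nondecreasing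
in `τ`. -/
theorem qhat_projection_and_monotone {m N : ℕ}
    (K : Set (Fin N → ℝ)) (hKne : K.Nonempty) (hKcl : IsClosed K)
    (hKcv : Convex ℝ K) (A : Matrix (Fin m) (Fin N) ℝ)
    (x₀ : Fin N → ℝ) (hx₀K : x₀ ∈ K) (hx₀g : gauge K x₀ = 1)
    (η : ℝ) (hη : 0 < η) (z : Fin m → ℝ)
    (xhat : ℝ → (Fin N → ℝ))
    (hfeas : ∀ τ > (0 : ℝ), xhat τ ∈ τ • K)
    (hmin : ∀ τ > (0 : ℝ), ∀ x ∈ τ • K,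
      (∑ j, ((A.mulVec (τ • x₀) j + η * z j) - A.mulVec (xhat τ) j) ^ 2) ≤
        ∑ j, ((A.mulVec (τ • x₀) j + η * z j) - A.mulVec x j) ^ 2) :
    (∀ τ > (0 : ℝ),
      A.mulVec (xhat τ - τ • x₀) ∈ τ • ((fun x => A.mulVec (x - x₀)) '' K) ∧
      ∀ w ∈ τ • ((fun x => A.mulVec (x - x₀)) '' K),
        (∑ j, (η * z j - A.mulVec (xhat τ - τ • x₀) j) ^ 2) ≤
          ∑ j, (η * z j - w j) ^ 2) ∧
    (∀ τ₁ τ₂ : ℝ, 0 < τ₁ → τ₁ ≤ τ₂ →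
      Real.sqrt (∑ j, (A.mulVec (xhat τ₁ - τ₁ • x₀) j) ^ 2) ≤
        Real.sqrt (∑ j, (A.mulVec (xhat τ₂ - τ₂ • x₀) j) ^ 2)) := by
  set K' : Set (Fin m → ℝ) := (fun x => A.mulVec (x - x₀)) '' K with hK'def
  have hK'cv : Convex ℝ K' := by
    rintro _ ⟨a, ha, rfl⟩ _ ⟨b, hb, rfl⟩ s t hs ht hst
    refine ⟨s • a + t • b, hKcv ha hb hs ht hst, ?_⟩
    have h : (s • a + t • b) - x₀ = s • (a - x₀) + t • (b - x₀) := by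
      funext j
      simp only [Pi.add_apply, Pi.sub_apply, Pi.smul_apply, smul_eq_mul]
      linear_combination x₀ j * hst
    simp only [h, Matrix.mulVec_add, Matrix.mulVec_smul]
  -- Part 1
  have part1 : ∀ τ > (0 : ℝ),
      A.mulVec (xhat τ - τ • x₀) ∈ τ • K' ∧
      ∀ w ∈ τ • K',
        (∑ j, (η * z j - A.mulVec (xhat τ - τ • x₀) j) ^ 2) ≤
          ∑ j, (η * z j - w j) ^ 2 := by
    intro τ hτ
    obtain ⟨k, hk, hkeq⟩ := hfeas τ hτ
    have hkeq' : τ • k = xhat τ := hkeq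
    constructor
    · refine ⟨A.mulVec (k - x₀), ⟨k, hk, rfl⟩, ?_⟩
      show τ • A.mulVec (k - x₀) = A.mulVec (xhat τ - τ • x₀)
      rw [← Matrix.mulVec_smul, smul_sub, hkeq']
    · rintro _ ⟨_, ⟨k', hk', rfl⟩, rfl⟩
      have hmem : τ • k' ∈ τ • K := Set.smul_mem_smul_set hk'
      have h := hmin τ hτ (τ • k') hmem
      calc (∑ j, (η * z j - A.mulVec (xhat τ - τ • x₀) j) ^ 2)
          = ∑ j, ((A.mulVec (τ • x₀) j + η * z j) - A.mulVec (xhat τ) j) ^ 2 := by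
            refine Finset.sum_congr rfl fun j _ => ?_
            simp only [Matrix.mulVec_sub, Pi.sub_apply]
            ring
        _ ≤ ∑ j, ((A.mulVec (τ • x₀) j + η * z j) - A.mulVec (τ • k') j) ^ 2 := h
        _ = ∑ j, (η * z j - (τ • A.mulVec (k' - x₀)) j) ^ 2 := by
            refine Finset.sum_congr rfl fun j _ => ?_
            simp only [Matrix.mulVec_sub, Matrix.mulVec_smul, Pi.sub_apply,
              Pi.smul_apply, smul_eq_mul]
            ring
  refine ⟨part1, ?_⟩
  -- Part 2
  intro τ₁ τ₂ hτ₁ hle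
  have hτ₂ : 0 < τ₂ := lt_of_lt_of_le hτ₁ hle
  obtain ⟨hp₁, hmin₁⟩ := part1 τ₁ hτ₁
  obtain ⟨hp₂, hmin₂⟩ := part1 τ₂ hτ₂
  set w : Fin m → ℝ := η • z with hw
  set p₁ : Fin m → ℝ := A.mulVec (xhat τ₁ - τ₁ • x₀) with hp₁def
  set p₂ : Fin m → ℝ := A.mulVec (xhat τ₂ - τ₂ • x₀) with hp₂def
  have hsub : ∀ u : Fin m → ℝ, ∑ j, (η * z j - u j) ^ 2 = (w - u) ⬝ᵥ (w - u) := by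
    intro u
    simp [dotProduct, sq, hw, Pi.sub_apply, Pi.smul_apply]
  have hmin₁' : ∀ x ∈ τ₁ • K', (w - p₁) ⬝ᵥ (w - p₁) ≤ (w - x) ⬝ᵥ (w - x) := by
    intro x hx
    rw [← hsub, ← hsub]
    exact hmin₁ x hx
  have hmin₂' : ∀ x ∈ τ₂ • K', (w - p₂) ⬝ᵥ (w - p₂) ≤ (w - x) ⬝ᵥ (w - x) := by
    intro x hx
    rw [← hsub, ← hsub]
    exact hmin₂ x hx
  set t : ℝ := τ₁ / τ₂ with htdef
  have ht0 : 0 < t := div_pos hτ₁ hτ₂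
  have ht1 : t ≤ 1 := (div_le_one hτ₂).2 hle
  have h12 : t • p₂ ∈ τ₁ • K' := by
    obtain ⟨v, hv, hveq⟩ := hp₂
    have hveq' : τ₂ • v = p₂ := hveq
    rw [← hveq', smul_smul, htdef, div_mul_cancel₀ _ (ne_of_gt hτ₂)]
    exact Set.smul_mem_smul_set hv
  have h21 : t⁻¹ • p₁ ∈ τ₂ • K' := by
    obtain ⟨v, hv, hveq⟩ := hp₁
    have hveq' : τ₁ • v = p₁ := hveq
    have hti : t⁻¹ = τ₂ / τ₁ := by rw [htdef, inv_div]
    rw [← hveq', hti, smul_smul, div_mul_cancel₀ _ (ne_of_gt hτ₁)]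
    exact Set.smul_mem_smul_set hv
  have key := proj_mono (hK'cv.smul τ₁) (hK'cv.smul τ₂) hp₁ hp₂ hmin₁' hmin₂' ht0 ht1 h12 h21
  apply Real.sqrt_le_sqrt
  rw [sum_sq_dp, sum_sq_dp]
  exact key
end
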